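/- If G is acyclic, then the set of vertices (extreme points) of the polytope F_G is exactly { x_R : R a route of G }. -/

import Mathlib

namespace FP

/-- The three possible types of an edge `(i,j)` with `i < j`. -/
inductive EdgeType : Type
  | forward
  | backward
  | bidirectional
  deriving DecidableEq

/-- An edge is a pair of endpoints `(i,j)` (with the convention `i < j`
for well-formed graphs) together with its type. -/
abbrev GEdge : Type := ℕ × ℕ × EdgeType

/-- A directed multigraph given by a list of edges, together with a
distinguished source and sink vertex. -/
structure LGraph : Type where
  edges : List GEdge
  src : ℕ
  snk : ℕ

namespace LGraph

/-- The number of edges. -/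
def m (G : LGraph) : ℕ := G.edges.length

/-- The smaller endpoint of the `e`-th edge. -/
def tail (G : LGraph) (e : Fin G.m) : ℕ := (G.edges.get e).1

/-- The larger endpoint of the `e`-th edge. -/
def head (G : LGraph) (e : Fin G.m) : ℕ := (G.edges.get e).2.1

/-- The type of the `e`-th edge. -/
def etype (G : LGraph) (e : Fin G.m) : EdgeType := (G.edges.get e).2.2

/-- Wellformedness: the graph has vertex set `{1,…,n}` and each edge `(i,j)`
satisfies `i < j`. -/
def WF (G : LGraph) (n : ℕ) : Prop := ∀ e ∈ G.edges, 1 ≤ e.1 ∧ e.1 < e.2.1 ∧ e.2.1 ≤ n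

/-- The netflow of `x` at the vertex `v`: total flow on edges `(v,k)`, `v < k`,
minus the total flow on edges `(i,v)`, `i < v`. -/
noncomputable def netflow (G : LGraph) (x : Fin G.m → ℝ) (v : ℕ) : ℝ :=
  ∑ e : Fin G.m, ((if G.tail e = v then x e else 0) - (if G.head e = v then x e else 0))

/-- The set of `u`-flows on `G`, where `u = e_src - e_snk`: the netflow is `1` at the
source, `-1` at the sink and `0` elsewhere, flows on forward edges are nonnegative and
flows on backward edges are nonpositive (bidirectional edges unrestricted).  This is
the flow polytope `F_G ⊆ ℝ^m`. -/
def flowSet (G : LGraph) : Set (Fin G.m → ℝ) :=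
  { x | (∀ v : ℕ, G.netflow x v = (if v = G.src then (1 : ℝ) else 0) - (if v = G.snk then 1 else 0))
      ∧ ∀ e : Fin G.m, (G.etype e = .forward → 0 ≤ x e) ∧ (G.etype e = .backward → x e ≤ 0) }

/-- One step of a directed walk: forward edges can be traversed from the smaller to the
larger endpoint, backward edges from the larger to the smaller, bidirectional edges both
ways. -/
def DStep (G : LGraph) (a b : ℕ) : Prop :=
  ∃ e : Fin G.m, (G.tail e = a ∧ G.head e = b ∧ G.etype e ≠ .backward) ∨
                 (G.head e = a ∧ G.tail e = b ∧ G.etype e ≠ .forward)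

/-- `G` is acyclic if it has no directed cycle. -/
def Acyclic (G : LGraph) : Prop := ∀ v : ℕ, ¬ Relation.TransGen G.DStep v v

/-- One step in the underlying undirected graph. -/
def UStep (G : LGraph) (a b : ℕ) : Prop :=
  ∃ e : Fin G.m, (G.tail e = a ∧ G.head e = b) ∨ (G.head e = a ∧ G.tail e = b)

/-- `G` is connected (as an undirected graph on the vertex set `{1,…,n}`). -/
def Connected (G : LGraph) (n : ℕ) : Prop :=
  ∀ a b : ℕ, 1 ≤ a → a ≤ n → 1 ≤ b → b ≤ n → Relation.ReflTransGen G.UStep a b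

/-- The starting vertex of a traversal step `(e, d)`: `d = true` means the edge `e` is
traversed from its smaller to its larger endpoint. -/
def sv (G : LGraph) (s : Fin G.m × Bool) : ℕ := if s.2 then G.tail s.1 else G.head s.1

/-- The ending vertex of a traversal step. -/
def ev (G : LGraph) (s : Fin G.m × Bool) : ℕ := if s.2 then G.head s.1 else G.tail s.1

/-- A route of `G`: a directed path from the source to the sink (not repeating edges),
traversing each edge in a direction allowed by its type. -/
structure Route (G : LGraph) : Type where
  steps : List (Fin G.m × Bool)
  ne : steps ≠ []
  chain : steps.Chain' (fun s t => G.ev s = G.sv t)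
  first : G.sv (steps.head ne) = G.src
  last : G.ev (steps.getLast ne) = G.snk
  dir : ∀ s ∈ steps, (s.2 = true → G.etype s.1 ≠ .backward) ∧ (s.2 = false → G.etype s.1 ≠ .forward)
  nodup : (steps.map Prod.fst).Nodup

/-- The signed characteristic vector of a route: `+1` on edges traversed from smaller to
larger endpoint, `-1` on edges traversed from larger to smaller endpoint, `0` on unused
edges. -/
noncomputable def Route.vec {G : LGraph} (R : Route G) : Fin G.m → ℝ := fun e =>
  if (e, true) ∈ R.steps then 1 else if (e, false) ∈ R.steps then -1 else 0

end LGraph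

/-- A point of `ℝ^α` is a lattice point if all its coordinates are integers. -/
def IsLatticePt {α : Type*} (x : α → ℝ) : Prop := ∀ i, ∃ z : ℤ, x i = (z : ℝ)

/-- Integral equivalence of two subsets `P ⊆ ℝ^α`, `Q ⊆ ℝ^β`: an affine map `φ` restricting
to a bijection from `P` onto `Q` and to a bijection between the lattice points of the
affine hull of `P` and those of the affine hull of `Q`. -/
def IntEquiv {α β : Type*} (P : Set (α → ℝ)) (Q : Set (β → ℝ)) : Prop :=
  ∃ φ : (α → ℝ) →ᵃ[ℝ] (β → ℝ),
    Set.BijOn φ P Q ∧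
    Set.BijOn φ ({x | IsLatticePt x} ∩ (affineSpan ℝ P : Set (α → ℝ)))
                ({x | IsLatticePt x} ∩ (affineSpan ℝ Q : Set (β → ℝ)))

/-! ### Lattice paths and the canonical indexing -/

/-- A lattice path is a list of letters, `true` = E-step `(1,0)`, `false` = N-step `(0,1)`.
`ovl ν` is the path `ν̄ = E ν N`. -/
def ovl (ν : List Bool) : List Bool := true :: ν ++ [false]

/-- Auxiliary function for the canonical indexing: `prev` is the previous letter,
`k` is the last index used. -/
def canonIdxAux : List Bool → Bool → ℕ → List ℕ
  | [], _, _ => []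
  | c :: rest, prev, k =>
    if prev && !c then k :: canonIdxAux rest c k
    else (k + 1) :: canonIdxAux rest c (k + 1)

/-- The canonical indexing of a word in `{E,N}`: reading left to right, each letter
receives the next positive integer, except that the first `N` of a maximal run of `N`s
receives the index of the immediately preceding `E` step. -/
def canonIdx (w : List Bool) : List ℕ := canonIdxAux w false 0

/-- The letter at position `p` (`true` = E). -/
def letterAt (w : List Bool) (p : ℕ) : Bool := w.getD p false

/-- The canonical index of the letter at position `p`. -/
def idxAt (w : List Bool) (p : ℕ) : ℕ := (canonIdx w).getD p 0

/-- The largest canonical index `n` of the word `w`. -/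
def nIdx (w : List Bool) : ℕ := idxAt w (w.length - 1)

/-- The set `I` of indices of E steps. -/
def Iset (w : List Bool) : Finset ℕ :=
  (((List.range w.length).filter (fun p => letterAt w p)).map (idxAt w)).toFinset

/-- The set `J` of indices of N steps. -/
def Jset (w : List Bool) : Finset ℕ :=
  (((List.range w.length).filter (fun p => !letterAt w p)).map (idxAt w)).toFinset

/-- The set `I ∩ J` of indices of valleys. -/
def Vset (w : List Bool) : Finset ℕ := Iset w ∩ Jset w

/-- The valleys `v_1 < v_2 < ⋯ < v_w` as a sorted list. -/
def valleyList (w : List Bool) : List ℕ := (Vset w).sort (· ≤ ·)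

/-- The number `w` of valleys. -/
def numVal (w : List Bool) : ℕ := (valleyList w).length

/-- The `k`-th valley `v_k` (`1 ≤ k ≤ numVal w`). -/
def vv (w : List Bool) (k : ℕ) : ℕ := (valleyList w).getD (k - 1) 0

/-! ### The ν-graph, its bidirectional version and partial augmentations -/

/-- `(i,j)` is an edge of the ν-graph iff `E_i ⋯ N_j` is a consecutive subword of `w`
whose only valleys are `E_k N_k` with `k = i` or `k = j`. -/
def isNuEdgeB (w : List Bool) (i j : ℕ) : Bool :=
  (List.range w.length).any fun p =>
    (List.range w.length).any fun q =>
      decide (p < q) && letterAt w p && !letterAt w q &&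
      decide (idxAt w p = i) && decide (idxAt w q = j) &&
      ((List.range w.length).all fun r =>
        !(decide (p ≤ r) && decide (r + 1 ≤ q) && letterAt w r && !letterAt w (r + 1)) ||
        decide (idxAt w r = i) || decide (idxAt w r = j))

/-- The list of edges `(i,j)`, `i < j`, of the ν-graph `G(ν)` (where `w = ν̄`). -/
def nuEdgePairs (w : List Bool) : List (ℕ × ℕ) :=
  ((List.range (nIdx w + 1)).flatMap fun i =>
    (List.range (nIdx w + 1)).map fun j => (i, j)).filter
    fun p => decide (p.1 < p.2) && isNuEdgeB w p.1 p.2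

/-- The edges of `G(ν)`, all forward. -/
def Gedges (w : List Bool) : List GEdge :=
  (nuEdgePairs w).map fun p => (p.1, p.2, EdgeType.forward)

/-- The edges of the bidirectional ν-graph `G_B(ν)`: an edge is bidirectional exactly
when both of its endpoints lie in `I ∩ J`. -/
def GBedges (w : List Bool) : List GEdge :=
  (nuEdgePairs w).map fun p =>
    (p.1, p.2, if p.1 ∈ Vset w ∧ p.2 ∈ Vset w then EdgeType.bidirectional else EdgeType.forward)

/-- Out-degree of a vertex in an edge list: the number of edges traversable out of `v`. -/
def outDegL (E : List GEdge) (v : ℕ) : ℕ :=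
  (E.filter fun e => (decide (e.1 = v) && decide (e.2.2 ≠ EdgeType.backward)) ||
                     (decide (e.2.1 = v) && decide (e.2.2 ≠ EdgeType.forward))).length

/-- In-degree of a vertex in an edge list: the number of edges traversable into `v`. -/
def inDegL (E : List GEdge) (v : ℕ) : ℕ :=
  (E.filter fun e => (decide (e.2.1 = v) && decide (e.2.2 ≠ EdgeType.backward)) ||
                     (decide (e.1 = v) && decide (e.2.2 ≠ EdgeType.forward))).length

/-- The full augmentation of an edge list on inner vertices `1,…,n`: add a source `s = 0`
and a sink `t = n+1` together with forward edges `(s,i)` and `(i,t)` for all `i`. -/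
def fullAug (n : ℕ) (E : List GEdge) : List GEdge :=
  E ++ ((List.range n).map fun i => (0, i + 1, EdgeType.forward))
    ++ ((List.range n).map fun i => (i + 1, n + 1, EdgeType.forward))

/-- The partial augmentation: the full augmentation with the edges `(s,i)` for which `i`
has out-degree one, and the edges `(j,t)` for which `j` has in-degree one, removed. -/
def partAug (n : ℕ) (E : List GEdge) : List GEdge :=
  E ++ ((List.range n).filterMap fun i =>
          if outDegL (fullAug n E) (i + 1) = 1 then none else some (0, i + 1, EdgeType.forward))
    ++ ((List.range n).filterMap fun j =>
          if inDegL (fullAug n E) (j + 1) = 1 then none else some (j + 1, n + 1, EdgeType.forward))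

/-- The graph `G̃_B(ν)`: the partial augmentation of the bidirectional ν-graph, with
source `s = 0` and sink `t = n+1`. -/
def GBt (w : List Bool) : LGraph := ⟨partAug (nIdx w) (GBedges w), 0, nIdx w + 1⟩

/-- The graph `G̃(ν)`: the partial augmentation of the ν-graph. -/
def Gt (w : List Bool) : LGraph := ⟨partAug (nIdx w) (Gedges w), 0, nIdx w + 1⟩

/-- The edges of the graph `G(ν,k)`: the bidirectional path of `G_B(ν)` is replaced by
`C_ν(k)`, i.e. all edges are made forward, the forward edge `(v_k, v_{k+1})` is removed
and the backward edge `(v_1, v_w)` is added when `k < w` (for `k = w` nothing changes). -/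
def GnuIedges (w : List Bool) (k : ℕ) : List GEdge :=
  ((nuEdgePairs w).filterMap fun p =>
    if k < numVal w ∧ p = (vv w k, vv w (k + 1)) then none
    else some (p.1, p.2, EdgeType.forward))
  ++ (if k < numVal w then [(vv w 1, vv w (numVal w), EdgeType.backward)] else [])

/-- The graph `G̃(ν,k)`: the partial augmentation of `G(ν,k)`. -/
def Gnut (w : List Bool) (k : ℕ) : LGraph := ⟨partAug (nIdx w) (GnuIedges w k), 0, nIdx w + 1⟩

/-- All candidate edges on the vertex set `{0,1,…,n+1}`. -/
def allCand (n : ℕ) : List GEdge :=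
  (List.range (n + 2)).flatMap fun a =>
    (List.range (n + 2)).flatMap fun b =>
      [(a, b, EdgeType.forward), (a, b, EdgeType.backward), (a, b, EdgeType.bidirectional)]

/-- The intersection `∩_{k ∈ S} G̃(ν,k)` of the partial augmentations of the graphs
`G(ν,k)`, `k ∈ S`, as a graph with source `0` and sink `n+1`. -/
def interGraph (w : List Bool) (S : Finset ℕ) : LGraph :=
  ⟨(allCand (nIdx w)).filter fun e =>
      decide (∀ k ∈ S, e ∈ partAug (nIdx w) (GnuIedges w k)), 0, nIdx w + 1⟩

/-! ### The polytopes `Q_i` -/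

/-- The condition on a route of `G̃_B(ν)` defining `Q_k` (`1 ≤ k < w`): the route does not
traverse the bidirectional edge `(v_k, v_{k+1})` forward, and traverses it backward
whenever it traverses any bidirectional edge backward. -/
def QRoute (w : List Bool) (k : ℕ) (R : LGraph.Route (GBt w)) : Prop :=
  (∀ e : Fin (GBt w).m, (GBt w).tail e = vv w k → (GBt w).head e = vv w (k + 1) →
      (e, true) ∉ R.steps) ∧
  ((∃ s ∈ R.steps, s.2 = false) →
      ∃ e : Fin (GBt w).m, (GBt w).tail e = vv w k ∧ (GBt w).head e = vv w (k + 1) ∧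
        (e, false) ∈ R.steps)

/-- The polytope `Q_k` for `1 ≤ k ≤ w`.  For `k < w` it is the convex hull of the signed
characteristic vectors of the routes satisfying `QRoute`, and `Q_w` is the flow polytope
`F_{G̃(ν)}` viewed inside `F_{G̃_B(ν)}` (the nonnegative flows). -/
def Qset (w : List Bool) (k : ℕ) : Set (Fin (GBt w).m → ℝ) :=
  if k = numVal w then { x ∈ (GBt w).flowSet | ∀ e, 0 ≤ x e }
  else convexHull ℝ { x | ∃ R : LGraph.Route (GBt w), QRoute w k R ∧ x = R.vec }

/-! ### Products of simplices -/

/-- The `i`-th standard basis vector. -/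
def stdBasisVec {α : Type*} [DecidableEq α] (i : α) : α → ℝ := fun k => if k = i then 1 else 0

/-- The product of simplices `Δ_a × Δ_b = conv{(e_i, e_j)} ⊆ ℝ^{a+1} × ℝ^{b+1}`. -/
def prodSimplices (a b : ℕ) : Set ((Fin (a + 1) ⊕ Fin (b + 1)) → ℝ) :=
  convexHull ℝ { x | ∃ (i : Fin (a + 1)) (j : Fin (b + 1)),
    x = Sum.elim (stdBasisVec i) (stdBasisVec j) }

/-! ### Arcs and (I,J)-trees -/

/-- An arc on `w`: a pair `(i,j)` with `i ∈ I` and `j ∈ J`. -/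
def IsArc (w : List Bool) (p : ℕ × ℕ) : Prop := p.1 ∈ Iset w ∧ p.2 ∈ Jset w

/-- The six configurations in which the arcs `(i,j) = p` and `(i',j') = q` cyclically
cross. -/
def CycCrossRaw (p q : ℕ × ℕ) : Prop :=
  (p.1 < q.1 ∧ q.1 < p.2 ∧ p.2 < q.2) ∨   -- i < i' < j < j'
  (q.2 < p.1 ∧ p.1 < q.1 ∧ q.1 < p.2) ∨   -- j' < i < i' < j
  (p.2 < q.2 ∧ q.2 < p.1 ∧ p.1 < q.1) ∨   -- j < j' < i < i'
  (q.1 < p.2 ∧ p.2 < q.2 ∧ q.2 < p.1) ∨   -- i' < j < j' < i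
  (p.1 < q.2 ∧ q.2 < q.1 ∧ q.1 < p.2) ∨   -- i < j' < i' < j
  (p.2 < p.1 ∧ p.1 < q.2 ∧ q.2 < q.1)     -- j < i < j' < i'

/-- Two arcs cyclically cross (up to swapping the roles of the two arcs). -/
def CycCross (p q : ℕ × ℕ) : Prop := CycCrossRaw p q ∨ CycCrossRaw q p

/-- A cyclic (I,J)-forest: a set of pairwise cyclically non-crossing arcs. -/
def CycForest (w : List Bool) (F : Set (ℕ × ℕ)) : Prop :=
  (∀ p ∈ F, IsArc w p) ∧ ∀ p ∈ F, ∀ q ∈ F, p ≠ q → ¬ CycCross p q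

/-- A cyclic (I,J)-tree: a maximal cyclic (I,J)-forest. -/
def CycTree (w : List Bool) (T : Set (ℕ × ℕ)) : Prop :=
  CycForest w T ∧ ∀ T', CycForest w T' → T ⊆ T' → T' = T

/-- An increasing (I,J)-forest: a cyclic (I,J)-forest all of whose arcs are increasing
or minimal. -/
def IncForest (w : List Bool) (F : Set (ℕ × ℕ)) : Prop :=
  CycForest w F ∧ ∀ p ∈ F, p.1 ≤ p.2

/-- An increasing (I,J)-tree: a maximal increasing (I,J)-forest. -/
def IncTree (w : List Bool) (T : Set (ℕ × ℕ)) : Prop :=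
  IncForest w T ∧ ∀ T', IncForest w T' → T ⊆ T' → T' = T

/-- Two edges `(a,b)` and `(c,d)` with `a < b`, `c < d` cross if `a < c < b < d` or
`c < a < d < b`. -/
def CrossE (p q : ℕ × ℕ) : Prop :=
  (p.1 < q.1 ∧ q.1 < p.2 ∧ p.2 < q.2) ∨ (q.1 < p.1 ∧ p.1 < q.2 ∧ q.2 < p.2)

/-- A graph on `I ∪ J` whose edges `(i,j)` satisfy `i ∈ I`, `j ∈ J`, `i < j`, which is
alternating (every vertex is a source or a sink) and non-crossing. -/
def AltNC (w : List Bool) (H : Set (ℕ × ℕ)) : Prop :=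
  (∀ p ∈ H, p.1 ∈ Iset w ∧ p.2 ∈ Jset w ∧ p.1 < p.2) ∧
  (∀ v : ℕ, (∀ p ∈ H, p.2 ≠ v) ∨ (∀ p ∈ H, p.1 ≠ v)) ∧
  (∀ p ∈ H, ∀ q ∈ H, p ≠ q → ¬ CrossE p q)

/-- The set `D_ν̄`: maximal alternating non-crossing graphs. -/
def Dnu (w : List Bool) (H : Set (ℕ × ℕ)) : Prop :=
  AltNC w H ∧ ∀ H', AltNC w H' → H ⊆ H' → H' = H

/-- A maximal arc: `(1,n)`, or an arc `(i,j)` with `j < i` and no index strictly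
between `j` and `i`. -/
def MaxArc (w : List Bool) (p : ℕ × ℕ) : Prop :=
  (p.1 = 1 ∧ p.2 = nIdx w) ∨
  (p.2 < p.1 ∧ ∀ k ∈ Iset w ∪ Jset w, ¬ (p.2 < k ∧ k < p.1))

/-! ### Cyclic peaks and rotations -/

/-- The positions `r` of the (non-wrap-around) cyclic peaks: `N` at `r` and `E` at `r+1`. -/
def peakPositions (w : List Bool) : List ℕ :=
  (List.range w.length).filter fun r => !letterAt w r && letterAt w (r + 1)

/-- The position of the `E` step of the `l`-th cyclic peak (`1 ≤ l ≤ w`); the `w`-th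
cyclic peak is the wrap-around peak, whose `E` step is at position `0`. -/
def shiftPos (w : List Bool) (l : ℕ) : ℕ :=
  if l = numVal w then 0 else (peakPositions w).getD (l - 1) 0 + 1

/-- The word `ν̄(l)` obtained by cyclically shifting `w = ν̄` to start at the `E` step of
the `l`-th cyclic peak. -/
def rotWord (w : List Bool) (l : ℕ) : List Bool :=
  w.drop (shiftPos w l) ++ w.take (shiftPos w l)

/-- The effect of the rotation on positions. -/
def rotPos (w : List Bool) (l : ℕ) (p : ℕ) : ℕ :=
  (p + w.length - shiftPos w l) % w.length

/-- The position of the `E` step with index `i`. -/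
def Epos (w : List Bool) (i : ℕ) : ℕ :=
  (((List.range w.length).filter fun p => letterAt w p && decide (idxAt w p = i))).headD 0

/-- The position of the `N` step with index `j`. -/
def Npos (w : List Bool) (j : ℕ) : ℕ :=
  (((List.range w.length).filter fun p => !letterAt w p && decide (idxAt w p = j))).headD 0

/-- The map induced on arcs by the cyclic rotation taking `ν̄` to `ν̄(l)`. -/
def arcMap (w : List Bool) (l : ℕ) (p : ℕ × ℕ) : ℕ × ℕ :=
  (idxAt (rotWord w l) (rotPos w l (Epos w p.1)),
   idxAt (rotWord w l) (rotPos w l (Npos w p.2)))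

/-- The arc determined by the `l`-th cyclic peak. -/
def peakArc (w : List Bool) (l : ℕ) : ℕ × ℕ :=
  if l = numVal w then (1, nIdx w)
  else (idxAt w ((peakPositions w).getD (l - 1) 0 + 1), idxAt w ((peakPositions w).getD (l - 1) 0))

end FP

/-!
Acyclicity gives a potential that strictly increases along directed edges, so positive flow
can be followed from the source until it reaches the sink. Hence every flow `x` carries some
route `R` with at least `θ > 0` on each of its edges, and `x = θ • x_R + (1 - θ) • z` with
`z` a flow of smaller support (when `θ ≥ 1`, `x - x_R` is a sign-conforming circulation, which
vanishes for the same reason). So `F_G` is the convex hull of the route vectors, and each `x_R`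
is an extreme point of it because it is exposed by a linear functional that rewards the
edges of `R` in their direction of use and charges every other edge for its flow.
-/

theorem convex_setOf_eq_or_lt {E : Type*} [AddCommGroup E] [Module ℝ E] (l : E →ₗ[ℝ] ℝ)
    (x : E) : Convex ℝ {y | y = x ∨ l y < l x} := by
  intro y hy z hz a b ha hb hab
  have hlz : l z ≤ l x := hz.elim (fun h => h ▸ le_rfl) le_of_lt
  rcases hy with rfl | hy
  · rcases hz with rfl | hz
    · exact Or.inl (Convex.combo_self hab _)
    rcases hb.eq_or_lt with rfl | hb
    · left
      rw [add_zero] at hab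
      rw [hab, one_smul, zero_smul, add_zero]
    · right
      simp only [map_add, map_smul, smul_eq_mul]
      linear_combination (l y) * hab + mul_pos hb (sub_pos.2 hz)
  · rcases ha.eq_or_lt with rfl | ha
    · rw [zero_add] at hab
      simpa [hab] using hz
    · right
      simp only [map_add, map_smul, smul_eq_mul]
      linear_combination (l x) * hab + mul_pos ha (sub_pos.2 hy) + mul_nonneg hb (sub_nonneg.2 hlz)

theorem mem_extremePoints_convexHull_of_lt {E : Type*} [AddCommGroup E] [Module ℝ E] {S : Set E}
    {x : E} (l : E →ₗ[ℝ] ℝ) (hx : x ∈ S) (hlt : ∀ y ∈ S, y ≠ x → l y < l x) :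
    x ∈ (convexHull ℝ S).extremePoints ℝ := by
  have hH : convexHull ℝ S ⊆ {y | y = x ∨ l y < l x} :=
    convexHull_min (fun y hy => (eq_or_ne y x).imp_right (hlt y hy)) (convex_setOf_eq_or_lt l x)
  refine mem_extremePoints_iff_left.2 ⟨subset_convexHull ℝ S hx, ?_⟩
  rintro y hy z hz ⟨a, b, ha, hb, hab, hxyz⟩
  by_contra hne
  have hly := (hH hy).resolve_left hne
  have hlz : l z ≤ l x := (hH hz).elim (fun h => h ▸ le_rfl) le_of_lt
  have hl := congrArg l hxyz
  simp only [map_add, map_smul, smul_eq_mul] at hl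
  linarith [mul_pos ha (sub_pos.2 hly), mul_nonneg hb.le (sub_nonneg.2 hlz),
    congrArg (· * l x) hab]

namespace FP
namespace LGraph

variable {G : LGraph} {x y : Fin G.m → ℝ}

def Conforms (G : LGraph) (x : Fin G.m → ℝ) : Prop :=
  ∀ e, (G.etype e = .forward → 0 ≤ x e) ∧ (G.etype e = .backward → x e ≤ 0)

def Traversable (G : LGraph) (s : Fin G.m × Bool) : Prop :=
  (s.2 = true → G.etype s.1 ≠ .backward) ∧ (s.2 = false → G.etype s.1 ≠ .forward)

def flowAlong (x : Fin G.m → ℝ) (s : Fin G.m × Bool) : ℝ := if s.2 then x s.1 else -x s.1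

def verts (G : LGraph) : Finset ℕ := Finset.univ.image G.tail ∪ Finset.univ.image G.head

open Classical in
noncomputable def height (G : LGraph) (v : ℕ) : ℕ :=
  (G.verts.filter fun u => Relation.TransGen G.DStep u v).card

theorem dStep_sv_ev {s : Fin G.m × Bool} (hs : G.Traversable s) : G.DStep (G.sv s) (G.ev s) := by
  obtain ⟨e, _ | _⟩ := s
  · exact ⟨e, Or.inr ⟨rfl, rfl, hs.2 rfl⟩⟩
  · exact ⟨e, Or.inl ⟨rfl, rfl, hs.1 rfl⟩⟩

theorem Acyclic.tail_ne_head (hacyc : G.Acyclic) (e : Fin G.m) : G.tail e ≠ G.head e := by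
  intro h
  have hstep : G.DStep (G.tail e) (G.head e) ∨ G.DStep (G.head e) (G.tail e) := by
    by_cases hb : G.etype e = .backward
    · exact Or.inr ⟨e, Or.inr ⟨rfl, rfl, by simp [hb]⟩⟩
    · exact Or.inl ⟨e, Or.inl ⟨rfl, rfl, hb⟩⟩
  rw [h, or_self] at hstep
  exact hacyc _ (.single hstep)

theorem Acyclic.etype_ne_bidirectional (hacyc : G.Acyclic) (e : Fin G.m) :
    G.etype e ≠ .bidirectional := fun h =>
  hacyc (G.tail e) (.head ⟨e, Or.inl ⟨rfl, rfl, by simp [h]⟩⟩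
    (.single ⟨e, Or.inr ⟨rfl, rfl, by simp [h]⟩⟩))

theorem mem_verts_of_dStep {a b : ℕ} (h : G.DStep a b) : a ∈ G.verts := by
  obtain ⟨e, ⟨rfl, -⟩ | ⟨rfl, -⟩⟩ := h <;> simp [verts]

theorem height_le (v : ℕ) : G.height v ≤ G.verts.card := by
  classical exact Finset.card_filter_le _ _

theorem Acyclic.height_lt (hacyc : G.Acyclic) {a b : ℕ} (h : G.DStep a b) :
    G.height a < G.height b := by
  classical
  refine Finset.card_lt_card ((Finset.ssubset_iff_of_subset fun u hu => ?_).2 ?_)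
  · rw [Finset.mem_filter] at hu ⊢
    exact ⟨hu.1, hu.2.tail h⟩
  · exact ⟨a, Finset.mem_filter.2 ⟨mem_verts_of_dStep h, .single h⟩,
      fun ha => hacyc a (Finset.mem_filter.1 ha).2⟩

theorem netflow_add (x y : Fin G.m → ℝ) (v : ℕ) :
    G.netflow (x + y) v = G.netflow x v + G.netflow y v := by
  simp only [netflow, ← Finset.sum_add_distrib, Pi.add_apply]
  refine Finset.sum_congr rfl fun e _ => ?_
  split_ifs <;> ring

theorem netflow_smul (c : ℝ) (x : Fin G.m → ℝ) (v : ℕ) :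
    G.netflow (c • x) v = c * G.netflow x v := by
  simp only [netflow, Finset.mul_sum, Pi.smul_apply, smul_eq_mul]
  refine Finset.sum_congr rfl fun e _ => ?_
  split_ifs <;> ring

theorem netflow_sub (x y : Fin G.m → ℝ) (v : ℕ) :
    G.netflow (x - y) v = G.netflow x v - G.netflow y v := by
  rw [sub_eq_add_neg, ← neg_one_smul ℝ y, netflow_add, netflow_smul]
  ring

theorem Conforms.add (hx : G.Conforms x) (hy : G.Conforms y) : G.Conforms (x + y) := fun e =>
  ⟨fun h => add_nonneg ((hx e).1 h) ((hy e).1 h), fun h => add_nonpos ((hx e).2 h) ((hy e).2 h)⟩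

theorem Conforms.smul (hx : G.Conforms x) {c : ℝ} (hc : 0 ≤ c) : G.Conforms (c • x) :=
  fun e =>
  ⟨fun h => mul_nonneg hc ((hx e).1 h), fun h => mul_nonpos_of_nonneg_of_nonpos hc ((hx e).2 h)⟩

theorem convex_flowSet : Convex ℝ G.flowSet := by
  intro x hx y hy a b ha hb hab
  refine ⟨fun v => ?_, (Conforms.smul hx.2 ha).add (Conforms.smul hy.2 hb)⟩
  rw [netflow_add, netflow_smul, netflow_smul, hx.1, hy.1, ← add_mul, hab, one_mul]

theorem flowAlong_sub (x y : Fin G.m → ℝ) (s : Fin G.m × Bool) :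
    flowAlong (x - y) s = flowAlong x s - flowAlong y s := by
  unfold flowAlong; split_ifs <;> simp only [Pi.sub_apply]; ring

theorem flowAlong_smul (c : ℝ) (x : Fin G.m → ℝ) (s : Fin G.m × Bool) :
    flowAlong (c • x) s = c * flowAlong x s := by
  unfold flowAlong; split_ifs <;> simp only [Pi.smul_apply, smul_eq_mul]; ring

theorem flowAlong_eq_zero_iff {s : Fin G.m × Bool} : flowAlong x s = 0 ↔ x s.1 = 0 := by
  unfold flowAlong; split_ifs <;> simp

theorem flowAlong_of_ne {e : Fin G.m} {b b' : Bool} (h : b ≠ b') :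
    flowAlong x (e, b') = -flowAlong x (e, b) := by
  cases b <;> cases b' <;> simp_all [flowAlong]

theorem Conforms.traversable (hx : G.Conforms x) {s : Fin G.m × Bool} (hs : 0 < flowAlong x s) :
    G.Traversable s := by
  obtain ⟨e, _ | _⟩ := s <;> simp only [flowAlong] at hs
  · exact ⟨nofun, fun _ hf => ((hx e).1 hf).not_gt (neg_pos.1 hs)⟩
  · exact ⟨fun _ hb => ((hx e).2 hb).not_gt hs, nofun⟩

def stepNetflow (G : LGraph) (v : ℕ) (s : Fin G.m × Bool) : ℝ :=
  (if G.sv s = v then 1 else 0) - if G.ev s = v then 1 else 0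

theorem sum_stepNetflow (v : ℕ) : ∀ (L : List (Fin G.m × Bool)) (hL : L ≠ []),
    L.IsChain (fun s t => G.ev s = G.sv t) →
    (L.map (G.stepNetflow v)).sum =
      (if G.sv (L.head hL) = v then 1 else 0) - if G.ev (L.getLast hL) = v then 1 else 0
  | [], hL, _ => absurd rfl hL
  | [s], _, _ => by simp [stepNetflow]; rfl
  | s :: t :: L, _, hc => by
    obtain ⟨hst, hc⟩ := List.isChain_cons_cons.1 hc
    rw [List.map_cons, List.sum_cons, sum_stepNetflow v (t :: L) (List.cons_ne_nil _ _) hc,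
      List.getLast_cons (List.cons_ne_nil _ _), List.head_cons, List.head_cons, stepNetflow, hst]
    ring

namespace Route

variable (R : Route G)

theorem vec_of_mem {e : Fin G.m} {b : Bool} (h : (e, b) ∈ R.steps) :
    R.vec e = if b then 1 else -1 := by
  cases b
  · have : (e, true) ∉ R.steps := fun h' => by
      simpa using List.inj_on_of_nodup_map R.nodup h h' rfl
    simp [vec, h, this]
  · simp [vec, h]

theorem vec_of_not_mem {e : Fin G.m} (h : ∀ b, (e, b) ∉ R.steps) : R.vec e = 0 := by
  simp [vec, h]

theorem flowAlong_vec {s : Fin G.m × Bool} (hs : s ∈ R.steps) : flowAlong R.vec s = 1 := by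
  obtain ⟨e, _ | _⟩ := s <;> simp [flowAlong, R.vec_of_mem hs]

theorem vec_cases (hacyc : G.Acyclic) (e : Fin G.m) :
    (R.vec e = 1 ∧ G.etype e = .forward) ∨ (R.vec e = -1 ∧ G.etype e = .backward) ∨
      R.vec e = 0 := by
  by_cases h : ∃ b, (e, b) ∈ R.steps
  · obtain ⟨b, hb⟩ := h
    have hdir := R.dir _ hb
    have hbi := hacyc.etype_ne_bidirectional e
    rw [R.vec_of_mem hb]
    cases b <;> cases ht : G.etype e <;> simp_all
  · exact Or.inr (Or.inr (R.vec_of_not_mem (not_exists.1 h)))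

theorem conforms_vec : G.Conforms R.vec := by
  intro e
  by_cases h : ∃ b, (e, b) ∈ R.steps
  · obtain ⟨b, hb⟩ := h
    have hdir := R.dir _ hb
    rw [R.vec_of_mem hb]
    cases b <;> simp_all
  · simp [R.vec_of_not_mem (not_exists.1 h)]

theorem netflow_vec (v : ℕ) : G.netflow R.vec v = (R.steps.map (G.stepNetflow v)).sum := by
  classical
  have hzero : ∀ e ∉ (R.steps.map Prod.fst).toFinset,
      ((if G.tail e = v then R.vec e else 0) - if G.head e = v then R.vec e else 0) = 0 := by
    intro e he
    have : ∀ b, (e, b) ∉ R.steps := fun b hb =>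
      he (List.mem_toFinset.2 (List.mem_map.2 ⟨_, hb, rfl⟩))
    simp [R.vec_of_not_mem this]
  rw [netflow, ← Finset.sum_subset (Finset.subset_univ _) fun e _ => hzero e,
    List.sum_toFinset _ R.nodup, List.map_map]
  refine congrArg List.sum (List.map_congr_left fun s hs => ?_)
  obtain ⟨e, _ | _⟩ := s <;>
    simp only [Function.comp, R.vec_of_mem hs, stepNetflow, sv, ev] <;> split_ifs <;> norm_num

theorem vec_mem_flowSet : R.vec ∈ G.flowSet := by
  refine ⟨fun v => ?_, R.conforms_vec⟩
  rw [R.netflow_vec, sum_stepNetflow v R.steps R.ne R.chain, R.first, R.last]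
  simp only [eq_comm]

end Route

theorem Conforms.sub_smul_vec (hx : G.Conforms x) (R : Route G) {c : ℝ}
    (hc : ∀ s ∈ R.steps, c ≤ flowAlong x s) : G.Conforms (x - c • R.vec) := by
  intro e
  by_cases h : ∃ b, (e, b) ∈ R.steps
  · obtain ⟨b, hb⟩ := h
    have hcb := hc _ hb
    have hdir := R.dir _ hb
    simp only [Pi.sub_apply, Pi.smul_apply, smul_eq_mul, R.vec_of_mem hb]
    cases b <;> simp only [flowAlong, Bool.false_eq_true, ite_true, ite_false] at hcb ⊢
    · exact ⟨fun hf => absurd hf (hdir.2 rfl), fun _ => by linarith⟩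
    · exact ⟨fun _ => by linarith, fun hbw => absurd hbw (hdir.1 rfl)⟩
  · simpa [R.vec_of_not_mem (not_exists.1 h)] using hx e

theorem exists_flowAlong_pos_of_netflow (hacyc : G.Acyclic) {v : ℕ} (hv : 0 ≤ G.netflow x v)
    (hin : 0 < G.netflow x v ∨ ∃ s, 0 < flowAlong x s ∧ G.ev s = v) :
    ∃ s, 0 < flowAlong x s ∧ G.sv s = v := by
  by_contra! hno
  have hterm :
      ∀ e, ((if G.tail e = v then x e else 0) - if G.head e = v then x e else 0) ≤ 0 := by
    intro e
    have h1 := hno (e, true)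
    have h2 := hno (e, false)
    simp only [flowAlong, sv, ite_true, Bool.false_eq_true, ite_false, neg_pos] at h1 h2
    have := hacyc.tail_ne_head e
    split_ifs with ht hh hh
    · exact absurd (ht.trans hh.symm) this
    · exact sub_nonpos.2 (not_lt.1 fun hpos => h1 hpos ht)
    · exact sub_nonpos.2 (not_lt.1 fun hneg => h2 hneg hh)
    · simp
  rcases hin with hpos | ⟨s, hs, rfl⟩
  · exact (Finset.sum_nonpos fun e _ => hterm e).not_gt hpos
  · refine hv.not_gt ((Finset.sum_lt_sum (fun e _ => hterm e)
      ⟨s.1, Finset.mem_univ _, ?_⟩).trans_eq Finset.sum_const_zero)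
    have := hacyc.tail_ne_head s.1
    obtain ⟨e, _ | _⟩ := s <;> simp [flowAlong, ev, this, Ne.symm this] at hs ⊢ <;> linarith

theorem not_flowAlong_pos_of_circulation (hacyc : G.Acyclic) (hx : G.Conforms x)
    (h0 : ∀ v, G.netflow x v = 0) (s : Fin G.m × Bool) (hs : 0 < flowAlong x s) : False := by
  obtain ⟨t, ht, hts⟩ :=
    exists_flowAlong_pos_of_netflow hacyc (h0 _).ge (Or.inr ⟨s, hs, rfl⟩)
  have hlt : G.height (G.ev s) < G.height (G.ev t) :=
    hts ▸ hacyc.height_lt (dStep_sv_ev (hx.traversable ht))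
  exact not_flowAlong_pos_of_circulation hacyc hx h0 t ht
termination_by G.verts.card - G.height (G.ev s)
decreasing_by have := G.height_le (G.ev t); omega

theorem eq_zero_of_circulation (hacyc : G.Acyclic) (hx : G.Conforms x)
    (h0 : ∀ v, G.netflow x v = 0) : x = 0 := by
  funext e
  by_contra hne
  rcases lt_or_gt_of_ne hne with h | h
  · exact not_flowAlong_pos_of_circulation hacyc hx h0 (e, false) (by simpa [flowAlong])
  · exact not_flowAlong_pos_of_circulation hacyc hx h0 (e, true) (by simpa [flowAlong])

theorem exists_path_to_snk (hacyc : G.Acyclic) (hx : x ∈ G.flowSet) (v : ℕ) (hv : v ≠ G.snk)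
    (hin : 0 < G.netflow x v ∨ ∃ s, 0 < flowAlong x s ∧ G.ev s = v) :
    ∃ (L : List (Fin G.m × Bool)) (hL : L ≠ []), L.IsChain (fun s t => G.ev s = G.sv t) ∧
      G.sv (L.head hL) = v ∧ G.ev (L.getLast hL) = G.snk ∧ (L.map Prod.fst).Nodup ∧
      ∀ s ∈ L, 0 < flowAlong x s ∧ G.height v ≤ G.height (G.sv s) := by
  have hnet : 0 ≤ G.netflow x v := by
    rw [hx.1 v, if_neg hv, sub_zero]; split_ifs <;> norm_num
  obtain ⟨s, hs, hsv⟩ := exists_flowAlong_pos_of_netflow hacyc hnet hin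
  have hlt : G.height v < G.height (G.ev s) :=
    hsv ▸ hacyc.height_lt (dStep_sv_ev (Conforms.traversable hx.2 hs))
  by_cases hw : G.ev s = G.snk
  · exact ⟨[s], List.cons_ne_nil _ _, List.isChain_singleton _, hsv, hw, List.nodup_singleton _,
      by simp [hs, hsv]⟩
  obtain ⟨L, hL, hc, hh, hl, hnd, hpos⟩ :=
    exists_path_to_snk hacyc hx (G.ev s) hw (Or.inr ⟨s, hs, rfl⟩)
  refine ⟨s :: L, List.cons_ne_nil _ _, hc.cons ?_, hsv, by rwa [List.getLast_cons hL], ?_, ?_⟩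
  · intro t ht
    rw [List.head?_eq_some_head hL, Option.mem_some_iff] at ht
    rw [← ht, hh]
  · refine List.nodup_cons.2 ⟨fun hmem => ?_, hnd⟩
    obtain ⟨⟨e, b⟩, ht, he⟩ := List.mem_map.1 hmem
    obtain ⟨htpos, htle⟩ := hpos _ ht
    subst he
    by_cases hb : s.2 = b
    · have : (s.1, b) = s := by rw [← hb]
      rw [this, hsv] at htle
      omega
    · rw [flowAlong_of_ne hb] at htpos
      linarith
  · exact List.forall_mem_cons.2
      ⟨⟨hs, hsv ▸ le_rfl⟩, fun t ht => ⟨(hpos t ht).1, hlt.le.trans (hpos t ht).2⟩⟩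
termination_by G.verts.card - G.height v
decreasing_by have := G.height_le (G.ev s); omega

theorem exists_route_flowAlong_pos (hacyc : G.Acyclic) (hst : G.src ≠ G.snk)
    (hx : x ∈ G.flowSet) : ∃ R : Route G, ∀ s ∈ R.steps, 0 < flowAlong x s := by
  obtain ⟨L, hL, hc, hh, hl, hnd, hpos⟩ := exists_path_to_snk hacyc hx G.src hst
    (Or.inl (by rw [hx.1, if_pos rfl, if_neg hst]; norm_num))
  exact ⟨⟨L, hL, hc, hh, hl, fun s hs => Conforms.traversable hx.2 (hpos s hs).1, hnd⟩,
    fun s hs => (hpos s hs).1⟩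

theorem netflow_sub_smul_vec (hx : x ∈ G.flowSet) (R : Route G) (c : ℝ) (v : ℕ) :
    G.netflow (x - c • R.vec) v =
      (1 - c) * ((if v = G.src then (1 : ℝ) else 0) - if v = G.snk then 1 else 0) := by
  rw [netflow_sub, netflow_smul, hx.1, R.vec_mem_flowSet.1]
  ring

theorem inv_smul_sub_smul_vec_mem_flowSet (hx : x ∈ G.flowSet) (R : Route G) {θ : ℝ}
    (hθ1 : θ < 1) (hθ : ∀ s ∈ R.steps, θ ≤ flowAlong x s) :
    (1 - θ)⁻¹ • (x - θ • R.vec) ∈ G.flowSet :=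
  ⟨fun v => by rw [netflow_smul, netflow_sub_smul_vec hx, inv_mul_cancel_left₀ (by linarith)],
    (Conforms.sub_smul_vec hx.2 R hθ).smul (inv_nonneg.2 (by linarith))⟩

theorem mem_convexHull_range_vec (hacyc : G.Acyclic) (hst : G.src ≠ G.snk) (x : Fin G.m → ℝ)
    (hx : x ∈ G.flowSet) : x ∈ convexHull ℝ (Set.range (Route.vec (G := G))) := by
  obtain ⟨R, hR⟩ := exists_route_flowAlong_pos hacyc hst hx
  obtain ⟨t, ht, hmin⟩ := R.steps.toFinset.exists_min_image (flowAlong x)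
    ⟨_, List.mem_toFinset.2 (List.head_mem R.ne)⟩
  rw [List.mem_toFinset] at ht
  set θ := flowAlong x t with hθ_def
  have hθ : ∀ s ∈ R.steps, θ ≤ flowAlong x s := fun s hs => hmin s (List.mem_toFinset.2 hs)
  rcases le_or_gt 1 θ with h1 | h1
  · have hzero := eq_zero_of_circulation hacyc
      (Conforms.sub_smul_vec hx.2 R fun s hs => h1.trans (hθ s hs))
      fun v => by rw [netflow_sub_smul_vec hx]; ring
    rw [one_smul, sub_eq_zero] at hzero
    exact subset_convexHull ℝ _ ⟨R, hzero.symm⟩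
  obtain ⟨z, hz_def⟩ : ∃ z, z = (1 - θ)⁻¹ • (x - θ • R.vec) := ⟨_, rfl⟩
  have hz : z ∈ G.flowSet := hz_def ▸ inv_smul_sub_smul_vec_mem_flowSet hx R h1 hθ
  have hxz : x = θ • R.vec + (1 - θ) • z := by
    rw [hz_def, smul_smul, mul_inv_cancel₀ (by linarith), one_smul, add_sub_cancel]
  have hsupp : (Finset.univ.filter fun e => z e ≠ 0).card <
      (Finset.univ.filter fun e => x e ≠ 0).card := by
    refine Finset.card_lt_card ((Finset.ssubset_iff_of_subset fun e he => ?_).2 ?_)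
    · rw [Finset.mem_filter] at he ⊢
      refine ⟨he.1, fun hxe => he.2 ?_⟩
      have : ∀ b, (e, b) ∉ R.steps := fun b hb => (hR _ hb).ne' (flowAlong_eq_zero_iff.2 hxe)
      simp [hz_def, hxe, R.vec_of_not_mem this]
    · refine ⟨t.1, by simpa using fun h => (hR t ht).ne' (flowAlong_eq_zero_iff.2 h), ?_⟩
      simp only [Finset.mem_filter, Finset.mem_univ, true_and, not_not]
      rw [← flowAlong_eq_zero_iff, hz_def, flowAlong_smul, flowAlong_sub, flowAlong_smul,
        R.flowAlong_vec ht, ← hθ_def]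
      ring
  rw [hxz]
  exact convex_convexHull ℝ _ (subset_convexHull ℝ _ (Set.mem_range_self R))
    (mem_convexHull_range_vec hacyc hst z hz) (hR t ht).le (by linarith) (by ring)
termination_by (Finset.univ.filter fun e => x e ≠ 0).card

theorem flowSet_eq_convexHull (hacyc : G.Acyclic) (hst : G.src ≠ G.snk) :
    G.flowSet = convexHull ℝ (Set.range (Route.vec (G := G))) :=
  Set.Subset.antisymm (fun x hx => mem_convexHull_range_vec hacyc hst x hx)
    (convexHull_min (Set.range_subset_iff.2 Route.vec_mem_flowSet) convex_flowSet)

namespace Route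

/-- Weights of a functional exposing `R.vec`: off `R`, each edge is charged `-1` per unit
of flow in its allowed direction. -/
noncomputable def weight (R : Route G) (e : Fin G.m) : ℝ :=
  if R.vec e = 0 then (if G.etype e = .forward then -1 else 1) else R.vec e

theorem vec_eq_or_vec_mul_weight_lt (hacyc : G.Acyclic) (R R' : Route G) (e : Fin G.m) :
    R'.vec e = R.vec e ∨ R'.vec e * R.weight e < R.vec e * R.weight e := by
  rcases R.vec_cases hacyc e with ⟨h, ht⟩ | ⟨h, ht⟩ | h <;>
    rcases R'.vec_cases hacyc e with ⟨h', ht'⟩ | ⟨h', ht'⟩ | h' <;> simp_all [weight]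

theorem mem_extremePoints_convexHull (hacyc : G.Acyclic) (R : Route G) :
    R.vec ∈ (convexHull ℝ (Set.range (Route.vec (G := G)))).extremePoints ℝ := by
  refine mem_extremePoints_convexHull_of_lt (Fintype.linearCombination ℝ R.weight)
    (Set.mem_range_self R) ?_
  rintro _ ⟨R', rfl⟩ hne
  obtain ⟨e, he⟩ := Function.ne_iff.1 hne
  simp only [Fintype.linearCombination_apply, smul_eq_mul]
  refine Finset.sum_lt_sum (fun e _ => ?_) ⟨e, Finset.mem_univ _,
    (vec_eq_or_vec_mul_weight_lt hacyc R R' e).resolve_left he⟩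
  rcases vec_eq_or_vec_mul_weight_lt hacyc R R' e with h | h
  · rw [h]
  · exact h.le

end Route

end LGraph
end FP

open FP in
theorem stmt3_general (n : ℕ) (hn : 2 ≤ n) (G : LGraph) (hsrc : G.src = 1) (hsnk : G.snk = n)
    (hacyc : G.Acyclic) :
    Set.extremePoints ℝ G.flowSet = { x | ∃ R : LGraph.Route G, x = R.vec } := by
  rw [G.flowSet_eq_convexHull hacyc (by omega)]
  refine Set.Subset.antisymm (fun x hx => ?_) ?_
  · obtain ⟨R, rfl⟩ := extremePoints_convexHull_subset hx
    exact ⟨R, rfl⟩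
  · rintro _ ⟨R, rfl⟩
    exact R.mem_extremePoints_convexHull hacyc

open FP in
/-- If `G` is acyclic, the set of extreme points of the polytope `F_G`
is exactly the set of signed characteristic vectors of routes of `G`. -/
theorem stmt3 (n : ℕ) (hn : 2 ≤ n) (G : LGraph) (hsrc : G.src = 1) (hsnk : G.snk = n)
    (hwf : G.WF n) (hconn : G.Connected n) (hacyc : G.Acyclic)
    (hroutes : ∀ e : Fin G.m, ∃ (R : LGraph.Route G) (c : Bool), (e, c) ∈ R.steps)
    (hends : ∀ e : Fin G.m,
      (G.tail e = 1 ∨ G.head e = 1 ∨ G.tail e = n ∨ G.head e = n) → G.etype e = .forward) :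
    Set.extremePoints ℝ G.flowSet = { x | ∃ R : LGraph.Route G, x = R.vec } :=
  stmt3_general n hn G hsrc hsnk hacyc
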